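/- arXiv:1704.00560 — 2 statements merged into one kernel-verified Lean document; each statement's English description precedes it below -/
import Mathlib

section
/- The function f(r) = r^l · ₁F₁(λ + l/2; l + 3/2; −r²/4), where ₁F₁ is Kummer's confluent hypergeometric function, solves the ODE f'' + (2/r + r/2)f' − (l(l+1)/r²)f + λf = 0 on (0,∞). -/
/-!
The coefficients `cₙ = (a)ₙ / ((b)ₙ n!)` of `M = ₁F₁(a; b; ·)` satisfy
`(n + 1)(n + b) cₙ₊₁ = (n + a) cₙ`, which is exactly the vanishing of the coefficient of `zⁿ`
in `z M'' + (b - z) M' - a M`. For `b ≥ 1` they are bounded by `(|a| + 1)ⁿ / n!`, a bound of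
exponential type that survives term-by-term differentiation, so `M` is entire and satisfies
Kummer's equation. The substitution `f(r) = rˡ M(-r²/4)` with `a = λ + l/2`, `b = l + 3/2`
turns Kummer's equation into the radial equation: its left-hand side equals `-rˡ` times
Kummer's expression at `z = -r²/4`.
-/

noncomputable section

/-- Kummer's confluent hypergeometric function
`₁F₁(a; b; z) = Σ_{n≥0} (a)ₙ zⁿ / ((b)ₙ n!)`, with `(a)ₙ` the (ascending)
Pochhammer symbol. -/
def hyp1F1 (a b z : ℝ) : ℝ :=
  ∑' n : ℕ, ((ascPochhammer ℝ n).eval a / ((ascPochhammer ℝ n).eval b * n.factorial)) * z ^ n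

open Topology Metric
open scoped Nat

def powerSeriesFun (c : ℕ → ℝ) (x : ℝ) : ℝ := ∑' n, c n * x ^ n

def derivCoeff (c : ℕ → ℝ) (n : ℕ) : ℝ := (n + 1) * c (n + 1)

section ExpType

variable {c : ℕ → ℝ} {C K : ℝ}

theorem abs_derivCoeff_le (hc : ∀ n, |c n| ≤ C * K ^ n / n !) (n : ℕ) :
    |derivCoeff c n| ≤ C * K * K ^ n / n ! := by
  have hn : (0 : ℝ) < n + 1 := by positivity
  calc |derivCoeff c n| = (n + 1) * |c (n + 1)| := by
        rw [derivCoeff, abs_mul, abs_of_pos hn]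
    _ ≤ (n + 1) * (C * K ^ (n + 1) / (n + 1)!) := by gcongr; exact hc _
    _ = C * K * K ^ n / n ! := by
        rw [Nat.factorial_succ]; push_cast; field_simp; ring

theorem summable_mul_pow (hc : ∀ n, |c n| ≤ C * K ^ n / n !) (x : ℝ) :
    Summable fun n => c n * x ^ n :=
  ((Real.summable_pow_div_factorial (K * |x|)).mul_left C).of_norm_bounded fun n =>
    calc ‖c n * x ^ n‖ = |c n| * |x| ^ n := by rw [Real.norm_eq_abs, abs_mul, abs_pow]
      _ ≤ C * K ^ n / n ! * |x| ^ n := by gcongr; exact hc n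
      _ = C * ((K * |x|) ^ n / n !) := by ring

theorem norm_mul_natCast_mul_pow_pred_le (hc : ∀ n, |c n| ≤ C * K ^ n / n !) {R y : ℝ}
    (hR : 1 ≤ R) (hy : |y| ≤ R) (n : ℕ) :
    ‖c n * (n * y ^ (n - 1))‖ ≤ C * ((2 * K * R) ^ n / n !) := by
  have hn : (n : ℝ) ≤ 2 ^ n := by exact_mod_cast (Nat.lt_two_pow_self).le
  have hy' : |y| ^ (n - 1) ≤ R ^ n :=
    (pow_le_pow_left₀ (abs_nonneg y) hy _).trans (pow_le_pow_right₀ hR (Nat.sub_le n 1))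
  have hcn : 0 ≤ C * K ^ n / n ! := (abs_nonneg _).trans (hc n)
  calc ‖c n * (n * y ^ (n - 1))‖ = |c n| * (n * |y| ^ (n - 1)) := by
        rw [Real.norm_eq_abs, abs_mul, abs_mul, abs_pow, Nat.abs_cast]
    _ ≤ C * K ^ n / n ! * (2 ^ n * R ^ n) := by gcongr; exact hc n
    _ = C * ((2 * K * R) ^ n / n !) := by rw [mul_pow, mul_pow]; ring

theorem hasDerivAt_powerSeriesFun (hc : ∀ n, |c n| ≤ C * K ^ n / n !) (x : ℝ) :
    HasDerivAt (powerSeriesFun c) (powerSeriesFun (derivCoeff c) x) x := by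
  have hx : x ∈ ball (0 : ℝ) (|x| + 1) := by simp
  have h := hasDerivAt_tsum_of_isPreconnected
    ((Real.summable_pow_div_factorial (2 * K * (|x| + 1))).mul_left C)
    isOpen_ball (convex_ball (0 : ℝ) _).isPreconnected
    (fun n y _ => (hasDerivAt_pow n y).const_mul (c n))
    (fun n y hy => by
      refine norm_mul_natCast_mul_pow_pred_le hc (R := |x| + 1) (by linarith [abs_nonneg x]) ?_ n
      simpa using (mem_ball_zero_iff.mp hy).le)
    hx (summable_mul_pow hc x) hx
  have hderiv : ∑' n, c n * (n * x ^ (n - 1)) = powerSeriesFun (derivCoeff c) x := by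
    have hs : HasSum (fun n => derivCoeff c n * x ^ n) (powerSeriesFun (derivCoeff c) x) :=
      (summable_mul_pow (abs_derivCoeff_le hc) x).hasSum
    refine ((hasSum_nat_add_iff' 1).mp ?_).tsum_eq
    simpa using hs.congr_fun fun n => by rw [derivCoeff]; ring
  exact hderiv ▸ h

end ExpType

theorem HasSum.mul_derivCoeff {c : ℕ → ℝ} {x S : ℝ}
    (h : HasSum (fun n => derivCoeff c n * x ^ n) S) :
    HasSum (fun n => n * c n * x ^ n) (x * S) := by
  refine (hasSum_nat_add_iff' 1).mp ?_
  simpa [derivCoeff, pow_succ, mul_comm, mul_left_comm, mul_assoc] using h.mul_left x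

def kummerCoeff (a b : ℝ) (n : ℕ) : ℝ :=
  (ascPochhammer ℝ n).eval a / ((ascPochhammer ℝ n).eval b * n !)

theorem hyp1F1_eq_powerSeriesFun (a b : ℝ) : hyp1F1 a b = powerSeriesFun (kummerCoeff a b) := rfl

theorem factorial_le_ascPochhammer_eval {b : ℝ} (hb : 1 ≤ b) (n : ℕ) :
    (n ! : ℝ) ≤ (ascPochhammer ℝ n).eval b := by
  induction n with
  | zero => simp
  | succ n ih =>
    calc ((n + 1)! : ℝ) = n ! * (n + 1) := by push_cast [Nat.factorial_succ]; ring
      _ ≤ (ascPochhammer ℝ n).eval b * (b + n) :=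
        mul_le_mul ih (by linarith) (by positivity) ((Nat.cast_nonneg _).trans ih)
      _ = (ascPochhammer ℝ (n + 1)).eval b := (ascPochhammer_succ_eval n b).symm

theorem abs_ascPochhammer_eval_le (a : ℝ) (n : ℕ) :
    |(ascPochhammer ℝ n).eval a| ≤ (|a| + 1) ^ n * n ! := by
  induction n with
  | zero => simp
  | succ n ih =>
    have hn : |a + n| ≤ (|a| + 1) * (n + 1) := by
      calc |a + n| ≤ |a| + n := by simpa using abs_add_le a (n : ℝ)
        _ ≤ (|a| + 1) * (n + 1) := by nlinarith [abs_nonneg a, (n.cast_nonneg : (0 : ℝ) ≤ n)]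
    calc |(ascPochhammer ℝ (n + 1)).eval a| = |(ascPochhammer ℝ n).eval a| * |a + n| := by
          rw [ascPochhammer_succ_eval, abs_mul]
      _ ≤ (|a| + 1) ^ n * n ! * ((|a| + 1) * (n + 1)) := by gcongr
      _ = (|a| + 1) ^ (n + 1) * (n + 1)! := by push_cast [Nat.factorial_succ]; ring

-- `C = 1` is written out so that the bound has the shape `hasDerivAt_powerSeriesFun` expects
theorem abs_kummerCoeff_le (a : ℝ) {b : ℝ} (hb : 1 ≤ b) (n : ℕ) :
    |kummerCoeff a b n| ≤ 1 * (|a| + 1) ^ n / n ! := by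
  have hfact : (0 : ℝ) < n ! := by positivity
  have hden : 0 < (ascPochhammer ℝ n).eval b * n ! :=
    mul_pos (ascPochhammer_pos n b (by linarith)) hfact
  have hpoch := factorial_le_ascPochhammer_eval hb n
  rw [kummerCoeff, abs_div, abs_of_pos hden, one_mul]
  calc |(ascPochhammer ℝ n).eval a| / ((ascPochhammer ℝ n).eval b * n !)
      ≤ (|a| + 1) ^ n * n ! / (n ! * n !) := by
        gcongr
        exact abs_ascPochhammer_eval_le a n
    _ = (|a| + 1) ^ n / n ! := by field_simp

theorem natCast_add_mul_derivCoeff_kummerCoeff (a : ℝ) {b : ℝ} (hb : 0 < b) (n : ℕ) :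
    (n + b) * derivCoeff (kummerCoeff a b) n = (n + a) * kummerCoeff a b n := by
  have hpoch := ascPochhammer_pos n b hb
  have hbn : b + n ≠ 0 := by positivity
  rw [derivCoeff, kummerCoeff, kummerCoeff, ascPochhammer_succ_eval, ascPochhammer_succ_eval,
    Nat.factorial_succ]
  push_cast
  field_simp
  ring

section Kummer

variable {a b : ℝ}

theorem deriv_hyp1F1 (hb : 1 ≤ b) :
    deriv (hyp1F1 a b) = powerSeriesFun (derivCoeff (kummerCoeff a b)) :=
  funext fun z => (hasDerivAt_powerSeriesFun (abs_kummerCoeff_le a hb) z).deriv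

theorem deriv_deriv_hyp1F1 (hb : 1 ≤ b) :
    deriv (deriv (hyp1F1 a b)) = powerSeriesFun (derivCoeff (derivCoeff (kummerCoeff a b))) :=
  funext fun z => by
    rw [deriv_hyp1F1 hb]
    exact (hasDerivAt_powerSeriesFun (abs_derivCoeff_le (abs_kummerCoeff_le a hb)) z).deriv

theorem differentiable_hyp1F1 (hb : 1 ≤ b) : Differentiable ℝ (hyp1F1 a b) := fun z =>
  (hasDerivAt_powerSeriesFun (abs_kummerCoeff_le a hb) z).differentiableAt

theorem differentiable_deriv_hyp1F1 (hb : 1 ≤ b) : Differentiable ℝ (deriv (hyp1F1 a b)) := by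
  rw [deriv_hyp1F1 hb]
  exact fun z =>
    (hasDerivAt_powerSeriesFun (abs_derivCoeff_le (abs_kummerCoeff_le a hb)) z).differentiableAt

theorem hyp1F1_kummer_ode (hb : 1 ≤ b) (z : ℝ) :
    z * deriv (deriv (hyp1F1 a b)) z + (b - z) * deriv (hyp1F1 a b) z - a * hyp1F1 a b z = 0 := by
  set c := kummerCoeff a b
  have hc := abs_kummerCoeff_le a hb
  have h0 := (summable_mul_pow hc z).hasSum
  have h1 := (summable_mul_pow (abs_derivCoeff_le hc) z).hasSum
  have h2 := (summable_mul_pow (abs_derivCoeff_le (abs_derivCoeff_le hc)) z).hasSum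
  have hsum := ((h2.mul_derivCoeff.add (h1.mul_left b)).sub h1.mul_derivCoeff).sub (h0.mul_left a)
  -- the coefficient of `zⁿ` in `z M'' + (b - z) M' - a M`
  have hterm : ∀ n : ℕ, n * derivCoeff c n * z ^ n + b * (derivCoeff c n * z ^ n)
      - n * c n * z ^ n - a * (c n * z ^ n) = 0 := fun n => by
    linear_combination z ^ n * natCast_add_mul_derivCoeff_kummerCoeff a (by linarith) n
  rw [deriv_deriv_hyp1F1 hb, deriv_hyp1F1 hb, hyp1F1_eq_powerSeriesFun]
  unfold powerSeriesFun
  linear_combination (hsum.congr_fun fun n => (hterm n).symm).unique hasSum_zero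

end Kummer

theorem hasDerivAt_pow_of_ne_zero {𝕜 : Type*} [NontriviallyNormedField 𝕜] (n : ℕ) {x : 𝕜}
    (hx : x ≠ 0) : HasDerivAt (fun s => s ^ n) (n * x ^ n / x) x := by
  rcases n with _ | n
  · simpa using hasDerivAt_const x (1 : 𝕜)
  · convert hasDerivAt_pow (n + 1) x using 1
    rw [pow_succ, Nat.add_sub_cancel]
    field_simp

theorem radial_ode_of_kummer_ode {M : ℝ → ℝ} (hM : Differentiable ℝ M)
    (hM' : Differentiable ℝ (deriv M)) (l : ℕ) (lam : ℝ) {r : ℝ} (hr : r ≠ 0)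
    (hK : -r ^ 2 / 4 * deriv (deriv M) (-r ^ 2 / 4)
      + (l + 3 / 2 - -r ^ 2 / 4) * deriv M (-r ^ 2 / 4) - (lam + l / 2) * M (-r ^ 2 / 4) = 0) :
    deriv (deriv (fun s : ℝ => s ^ l * M (-s ^ 2 / 4))) r
        + (2 / r + r / 2) * deriv (fun s : ℝ => s ^ l * M (-s ^ 2 / 4)) r
        - ((l : ℝ) * (l + 1) / r ^ 2) * (r ^ l * M (-r ^ 2 / 4))
        + lam * (r ^ l * M (-r ^ 2 / 4)) = 0 := by
  have hq : ∀ s : ℝ, HasDerivAt (fun t : ℝ => -t ^ 2 / 4) (-s / 2) s := fun s =>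
    ((hasDerivAt_pow 2 s).fun_neg.div_const 4).congr_deriv (by ring)
  set f' : ℝ → ℝ := fun s => l * s ^ l / s * M (-s ^ 2 / 4)
    + s ^ l * (deriv M (-s ^ 2 / 4) * (-s / 2)) with hf'_def
  have hf : ∀ s ≠ 0, HasDerivAt (fun s : ℝ => s ^ l * M (-s ^ 2 / 4)) (f' s) s := fun s hs =>
    (hasDerivAt_pow_of_ne_zero l hs).mul ((hM _).hasDerivAt.comp s (hq s))
  have hf' : HasDerivAt f' _ r :=
    ((((hasDerivAt_pow_of_ne_zero l hr).const_mul (l : ℝ)).div (hasDerivAt_id r) hr).mul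
        ((hM _).hasDerivAt.comp r (hq r))).add
      ((hasDerivAt_pow_of_ne_zero l hr).mul
        (((hM' _).hasDerivAt.comp r (hq r)).mul ((hasDerivAt_id r).neg.div_const 2)))
  have hderiv : deriv (fun s : ℝ => s ^ l * M (-s ^ 2 / 4)) =ᶠ[𝓝 r] f' :=
    (eventually_ne_nhds hr).mono fun s hs => (hf s hs).deriv
  rw [hderiv.deriv_eq, hf'.deriv, (hf r hr).deriv]
  simp only [id, Function.comp_apply, Pi.div_apply, hf'_def]
  field_simp
  rw [neg_div] at hK
  linear_combination (-4 * r ^ 2 * r ^ l) * hK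

theorem statement8_general (l : ℕ) (lam : ℝ) :
    ∀ r : ℝ, 0 < r →
      (deriv (deriv (fun s : ℝ => s ^ l * hyp1F1 (lam + l / 2) (l + 3 / 2) (-s ^ 2 / 4))) r
        + (2 / r + r / 2) *
            deriv (fun s : ℝ => s ^ l * hyp1F1 (lam + l / 2) (l + 3 / 2) (-s ^ 2 / 4)) r
        - ((l : ℝ) * (l + 1) / r ^ 2) *
            (r ^ l * hyp1F1 (lam + l / 2) (l + 3 / 2) (-r ^ 2 / 4))
        + lam * (r ^ l * hyp1F1 (lam + l / 2) (l + 3 / 2) (-r ^ 2 / 4))) = 0 := by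
  intro r hr
  have hb : (1 : ℝ) ≤ l + 3 / 2 := by linarith [(l.cast_nonneg : (0 : ℝ) ≤ l)]
  exact radial_ode_of_kummer_ode (differentiable_hyp1F1 hb) (differentiable_deriv_hyp1F1 hb)
    l lam hr.ne' (hyp1F1_kummer_ode hb _)

/-- `f(r) = r^l · ₁F₁(λ + l/2; l + 3/2; −r²/4)` solves
`f'' + (2/r + r/2)f' − (l(l+1)/r²)f + λf = 0` on `(0,∞)`. -/
theorem statement8 (l : ℕ) (hl : 1 ≤ l) (lam : ℝ) :
    ∀ r : ℝ, 0 < r →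
      (deriv (deriv (fun s : ℝ => s ^ l * hyp1F1 (lam + l / 2) (l + 3 / 2) (-s ^ 2 / 4))) r
        + (2 / r + r / 2) *
            deriv (fun s : ℝ => s ^ l * hyp1F1 (lam + l / 2) (l + 3 / 2) (-s ^ 2 / 4)) r
        - ((l : ℝ) * (l + 1) / r ^ 2) *
            (r ^ l * hyp1F1 (lam + l / 2) (l + 3 / 2) (-r ^ 2 / 4))
        + lam * (r ^ l * hyp1F1 (lam + l / 2) (l + 3 / 2) (-r ^ 2 / 4))) = 0 :=
  statement8_general l lam
end
end

section
/- If φ is a rapidly decaying smooth divergence-free eigenvector of the linearized operator, so that the momentum τ = x × φ satisfies −Δτ + 2ω − (x/2)·∇τ + (U·∇)τ + (φ·∇)T + x×∇p = λτ with ω = ∇×φ and T = x×U, then integrating over ℝ³ yields (3/2)∫_{ℝ³} τ = λ∫_{ℝ³} τ. Consequently, if ∫_{ℝ³} x × φ ≠ 0, then λ = 3/2. -/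
noncomputable section
open MeasureTheory
open scoped BigOperators

/-- Points of `ℝ³` as functions `Fin 3 → ℝ`. -/
abbrev V3 : Type := Fin 3 → ℝ

/-- Partial derivative `∂ⱼ f` of a scalar field. -/
def pd (j : Fin 3) (f : V3 → ℝ) (x : V3) : ℝ := fderiv ℝ f x (Pi.single j 1)

/-- Laplacian of a scalar field. -/
def lap (f : V3 → ℝ) (x : V3) : ℝ := ∑ j : Fin 3, pd j (fun y => pd j f y) x

/-- Divergence of a vector field. -/
def div3 (v : V3 → V3) (x : V3) : ℝ := ∑ j : Fin 3, pd j (fun y => v y j) x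

/-- Curl of a vector field. -/
def curl3 (v : V3 → V3) (x : V3) : V3 :=
  ![pd 1 (fun y => v y 2) x - pd 2 (fun y => v y 1) x,
    pd 2 (fun y => v y 0) x - pd 0 (fun y => v y 2) x,
    pd 0 (fun y => v y 1) x - pd 1 (fun y => v y 0) x]

/-- Cross product in `ℝ³`. -/
def cross3 (a b : V3) : V3 :=
  ![a 1 * b 2 - a 2 * b 1, a 2 * b 0 - a 0 * b 2, a 0 * b 1 - a 1 * b 0]

lemma insertNth_eq_add (j : Fin 3) (t : ℝ) (w : Fin 2 → ℝ) :
    (Fin.insertNth (α := fun _ => ℝ) j t w : V3) = Fin.insertNth (α := fun _ => ℝ) j 0 w + t • (Pi.single j 1 : V3) := by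
  funext i
  refine Fin.succAboveCases j ?_ ?_ i
  · simp
  · intro k
    simp [Fin.insertNth_apply_succAbove, Pi.single_eq_of_ne (Fin.succAbove_ne j k)]

lemma integral_pd_eq_zero (j : Fin 3) {g : V3 → ℝ} (hg : Differentiable ℝ g)
    (h1 : Integrable g) (h2 : Integrable (pd j g)) : ∫ x, pd j g x = 0 := by
  have hmp : MeasurePreserving ((MeasurableEquiv.piFinSuccAbove (fun _ : Fin 3 => ℝ) j).symm) :=
    (volume_preserving_piFinSuccAbove (fun _ : Fin 3 => ℝ) j).symm
  set e := (MeasurableEquiv.piFinSuccAbove (fun _ : Fin 3 => ℝ) j).symm with he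
  have key : ∫ x, pd j g x = ∫ z : ℝ × (Fin 2 → ℝ), pd j g (e z) :=
    (hmp.integral_comp' _).symm
  have h2' : Integrable (fun z : ℝ × (Fin 2 → ℝ) => pd j g (e z)) :=
    (hmp.integrable_comp_emb e.measurableEmbedding).mpr h2
  have h1' : Integrable (fun z : ℝ × (Fin 2 → ℝ) => g (e z)) :=
    (hmp.integrable_comp_emb e.measurableEmbedding).mpr h1
  rw [key]
  rw [Measure.volume_eq_prod ℝ (Fin 2 → ℝ)] at h1' h2' ⊢
  rw [integral_prod_symm _ h2']
  have hz : ∀ᵐ w : Fin 2 → ℝ, (∫ t : ℝ, pd j g (e (t, w))) = 0 := by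
    filter_upwards [h1'.prod_left_ae, h2'.prod_left_ae] with w hw1 hw2
    have hptw : ∀ t : ℝ, e (t, w) = e (0, w) + t • (Pi.single j 1 : V3) := by
      intro t
      have : ∀ s : ℝ, e (s, w) = j.insertNth s w := fun s => rfl
      rw [this, this, insertNth_eq_add]
    have hder : ∀ t : ℝ, HasDerivAt (fun s => g (e (s, w))) (pd j g (e (t, w))) t := by
      intro t
      have hfun : (fun s : ℝ => g (e (s, w)))
          = fun s => g (e (0, w) + s • (Pi.single j 1 : V3)) := by
        funext s; rw [hptw s]
      rw [hfun, hptw t]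
      have hL : HasDerivAt (fun s : ℝ => e (0, w) + s • (Pi.single j 1 : V3))
          (Pi.single j 1 : V3) t := by
        simpa using (((hasDerivAt_id t).smul_const (Pi.single j 1 : V3)).const_add (e (0, w)))
      have h := (hg (e (0, w) + t • (Pi.single j 1 : V3))).hasFDerivAt.comp_hasDerivAt t hL
      exact h
    exact integral_eq_zero_of_hasDerivAt_of_integrable hder hw2 hw1
  rw [integral_congr_ae hz, integral_zero]

lemma norm_single_one (j : Fin 3) : ‖(Pi.single j 1 : V3)‖ = 1 := by
  rw [Pi.norm_single]; norm_num

lemma abs_D_le (v : V3 → V3) (j k : Fin 3) (x : V3) :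
    |fderiv ℝ v x (Pi.single j 1) k| ≤ ‖fderiv ℝ v x‖ := by
  have h1 : |fderiv ℝ v x (Pi.single j 1) k| ≤ ‖fderiv ℝ v x (Pi.single j 1)‖ := by
    simpa [Real.norm_eq_abs] using norm_le_pi_norm (fderiv ℝ v x (Pi.single j 1)) k
  refine h1.trans ?_
  calc ‖fderiv ℝ v x (Pi.single j 1)‖ ≤ ‖fderiv ℝ v x‖ * ‖(Pi.single j 1 : V3)‖ :=
        (fderiv ℝ v x).le_opNorm _
    _ = ‖fderiv ℝ v x‖ := by rw [norm_single_one]; ring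

lemma abs_D2_le (v : V3 → V3) (j j' k : Fin 3) (x : V3) :
    |fderiv ℝ (fderiv ℝ v) x (Pi.single j 1) (Pi.single j' 1) k|
      ≤ ‖fderiv ℝ (fderiv ℝ v) x‖ := by
  have h1 : |fderiv ℝ (fderiv ℝ v) x (Pi.single j 1) (Pi.single j' 1) k|
      ≤ ‖fderiv ℝ (fderiv ℝ v) x (Pi.single j 1) (Pi.single j' 1)‖ := by
    simpa [Real.norm_eq_abs] using
      norm_le_pi_norm (fderiv ℝ (fderiv ℝ v) x (Pi.single j 1) (Pi.single j' 1)) k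
  refine h1.trans ?_
  calc ‖fderiv ℝ (fderiv ℝ v) x (Pi.single j 1) (Pi.single j' 1)‖
      ≤ ‖fderiv ℝ (fderiv ℝ v) x (Pi.single j 1)‖ * ‖(Pi.single j' 1 : V3)‖ :=
        (fderiv ℝ (fderiv ℝ v) x (Pi.single j 1)).le_opNorm _
    _ = ‖fderiv ℝ (fderiv ℝ v) x (Pi.single j 1)‖ := by rw [norm_single_one]; ring
    _ ≤ ‖fderiv ℝ (fderiv ℝ v) x‖ * ‖(Pi.single j 1 : V3)‖ :=
        (fderiv ℝ (fderiv ℝ v) x).le_opNorm _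
    _ = ‖fderiv ℝ (fderiv ℝ v) x‖ := by rw [norm_single_one]; ring

lemma abs_pd_le (f : V3 → ℝ) (j : Fin 3) (x : V3) : |pd j f x| ≤ ‖fderiv ℝ f x‖ := by
  calc |pd j f x| = ‖fderiv ℝ f x (Pi.single j 1)‖ := by rw [pd, Real.norm_eq_abs]
    _ ≤ ‖fderiv ℝ f x‖ * ‖(Pi.single j 1 : V3)‖ := (fderiv ℝ f x).le_opNorm _
    _ = ‖fderiv ℝ f x‖ := by rw [norm_single_one]; ring

lemma abs_coord_le (x : V3) (k : Fin 3) : |x k| ≤ 1 + ‖x‖ := by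
  have := norm_le_pi_norm x k
  simp only [Real.norm_eq_abs] at this
  linarith [norm_nonneg x]

lemma abs_comp_le (v : V3 → V3) (x : V3) (k : Fin 3) : |v x k| ≤ ‖v x‖ := by
  simpa [Real.norm_eq_abs] using norm_le_pi_norm (v x) k

lemma integrable_decay4 {f : V3 → ℝ} (hf : Continuous f) {C : ℝ}
    (h : ∀ x : V3, (1 + ‖x‖) ^ 4 * |f x| ≤ C) : Integrable f := by
  have hfin : ((Module.finrank ℝ V3 : ℝ) < 4) := by
    simp [Module.finrank_fin_fun]; norm_num
  have hbase : Integrable (fun x : V3 => C * (1 + ‖x‖) ^ (-(4 : ℝ))) :=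
    (integrable_one_add_norm hfin).const_mul C
  refine hbase.mono' hf.aestronglyMeasurable (Filter.Eventually.of_forall fun x => ?_)
  have ht : (0:ℝ) < 1 + ‖x‖ := by positivity
  have hr : (1 + ‖x‖) ^ (-(4:ℝ)) = ((1 + ‖x‖) ^ (4:ℕ))⁻¹ := by
    rw [Real.rpow_neg ht.le, show ((4:ℝ)) = ((4:ℕ):ℝ) by norm_num, Real.rpow_natCast]
  have h4 : (0:ℝ) < (1 + ‖x‖) ^ (4:ℕ) := by positivity
  rw [Real.norm_eq_abs, hr]
  have hC : |f x| ≤ C / (1 + ‖x‖) ^ (4:ℕ) := by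
    rw [le_div_iff₀ h4]; linarith [h x]
  have hC0 : 0 ≤ C := le_trans (by positivity) (h x)
  calc |f x| ≤ C / (1 + ‖x‖) ^ (4:ℕ) := hC
    _ = C * ((1 + ‖x‖) ^ (4:ℕ))⁻¹ := by ring

lemma cross3_apply (u v : V3) (i : Fin 3) :
    cross3 u v i = u (i+1) * v (i+2) - u (i+2) * v (i+1) := by
  fin_cases i <;> simp [cross3]

lemma curl3_apply (v : V3 → V3) (x : V3) (i : Fin 3) :
    curl3 v x i = pd (i+1) (fun y => v y (i+2)) x - pd (i+2) (fun y => v y (i+1)) x := by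
  fin_cases i <;> simp [curl3]
lemma pd_sub {f g : V3 → ℝ} {x : V3} (j : Fin 3) (hf : DifferentiableAt ℝ f x)
    (hg : DifferentiableAt ℝ g x) :
    pd j (fun y => f y - g y) x = pd j f x - pd j g x := by
  simp [pd, fderiv_fun_sub hf hg]
lemma pd_add {f g : V3 → ℝ} {x : V3} (j : Fin 3) (hf : DifferentiableAt ℝ f x)
    (hg : DifferentiableAt ℝ g x) :
    pd j (fun y => f y + g y) x = pd j f x + pd j g x := by
  simp [pd, fderiv_fun_add hf hg]
lemma pd_mul {f g : V3 → ℝ} {x : V3} (j : Fin 3) (hf : DifferentiableAt ℝ f x)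
    (hg : DifferentiableAt ℝ g x) :
    pd j (fun y => f y * g y) x = pd j f x * g x + f x * pd j g x := by
  simp [pd, fderiv_fun_mul hf hg]; ring
lemma pd_const_mul {g : V3 → ℝ} {x : V3} (j : Fin 3) (c : ℝ) (hg : DifferentiableAt ℝ g x) :
    pd j (fun y => c * g y) x = c * pd j g x := by
  simp [pd, fderiv_const_mul hg c]
lemma pd_proj (j k : Fin 3) (x : V3) :
    pd j (fun y : V3 => y k) x = if k = j then 1 else 0 := by
  have h : fderiv ℝ (fun y : V3 => y k) x
      = (ContinuousLinearMap.proj (R := ℝ) (φ := fun _ : Fin 3 => ℝ) k) :=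
    (ContinuousLinearMap.proj (R := ℝ) (φ := fun _ : Fin 3 => ℝ) k).fderiv
  rw [pd, h]
  simp [Pi.single_apply]
lemma pd_comp_proj {v : V3 → V3} (hv : Differentiable ℝ v) (j k : Fin 3) (x : V3) :
    pd j (fun y => v y k) x = fderiv ℝ v x (Pi.single j 1) k := by
  have h : fderiv ℝ (fun y => v y k) x
      = (ContinuousLinearMap.proj (R := ℝ) (φ := fun _ : Fin 3 => ℝ) k).comp (fderiv ℝ v x) := by
    have h2 := fderiv_comp (𝕜 := ℝ)
      (g := (ContinuousLinearMap.proj (R := ℝ) (φ := fun _ : Fin 3 => ℝ) k)) (f := v) x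
      (ContinuousLinearMap.differentiableAt _) (hv x)
    simpa [ContinuousLinearMap.fderiv, Function.comp_def] using h2
  rw [pd, h]; rfl
lemma contDiff_pd {f : V3 → ℝ} (hf : ContDiff ℝ (⊤ : ℕ∞) f) (j : Fin 3) : ContDiff ℝ (⊤ : ℕ∞) (pd j f) := by
  have h1 : ContDiff ℝ (⊤ : ℕ∞) (fderiv ℝ f) := hf.fderiv_right (by simp)
  exact (ContinuousLinearMap.apply ℝ ℝ (Pi.single j 1 : V3)).contDiff.comp h1
lemma contDiff_D {v : V3 → V3} (hv : ContDiff ℝ (⊤ : ℕ∞) v) (j k : Fin 3) :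
    ContDiff ℝ (⊤ : ℕ∞) (fun x => fderiv ℝ v x (Pi.single j 1) k) := by
  have h1 : ContDiff ℝ (⊤ : ℕ∞) (fderiv ℝ v) := hv.fderiv_right (by simp)
  exact (((ContinuousLinearMap.proj (R := ℝ) (φ := fun _ : Fin 3 => ℝ) k).comp
    (ContinuousLinearMap.apply ℝ V3 (Pi.single j 1 : V3))).contDiff).comp h1
lemma pd_D {v : V3 → V3} (hv : ContDiff ℝ (⊤ : ℕ∞) v) (j j' k : Fin 3) (x : V3) :
    pd j (fun y => fderiv ℝ v y (Pi.single j' 1) k) x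
      = fderiv ℝ (fderiv ℝ v) x (Pi.single j 1) (Pi.single j' 1) k := by
  have hd : Differentiable ℝ (fderiv ℝ v) := (hv.fderiv_right (m := (⊤ : ℕ∞)) (by simp)).differentiable (by simp)
  set L : (V3 →L[ℝ] V3) →L[ℝ] ℝ :=
    (ContinuousLinearMap.proj (R := ℝ) (φ := fun _ : Fin 3 => ℝ) k).comp
      (ContinuousLinearMap.apply ℝ V3 (Pi.single j' 1 : V3)) with hL
  have h : fderiv ℝ (fun y => L (fderiv ℝ v y)) x = L.comp (fderiv ℝ (fderiv ℝ v) x) := by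
    have h2 := fderiv_comp (𝕜 := ℝ) (g := L) (f := fderiv ℝ v) x (L.differentiableAt) (hd x)
    simpa [ContinuousLinearMap.fderiv, Function.comp_def] using h2
  have he : (fun y => fderiv ℝ v y (Pi.single j' 1) k) = fun y => L (fderiv ℝ v y) := rfl
  rw [pd, he, h]; rfl

lemma pd_cross (v : V3 → V3) (hv : ContDiff ℝ (⊤ : ℕ∞) v) (a b j : Fin 3) (x : V3) :
    pd j (fun y => y a * v y b - y b * v y a) x
      = ((if a = j then (1:ℝ) else 0) * v x b + x a * fderiv ℝ v x (Pi.single j 1) b)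
        - ((if b = j then (1:ℝ) else 0) * v x a + x b * fderiv ℝ v x (Pi.single j 1) a) := by
  have hvd : Differentiable ℝ v := hv.differentiable (by simp)
  have hk : ∀ k : Fin 3, DifferentiableAt ℝ (fun y : V3 => v y k) x := fun k =>
    ((contDiff_pi.1 hv k).differentiable (by simp)) x
  have hp : ∀ k : Fin 3, DifferentiableAt ℝ (fun y : V3 => y k) x := fun k =>
    ((contDiff_pi.1 (contDiff_id (E := V3)) k).differentiable (by simp : (⊤ : WithTop ℕ∞) ≠ 0)) x
  have d1 : DifferentiableAt ℝ (fun y : V3 => y a * v y b) x := (hp a).mul (hk b)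
  have d2 : DifferentiableAt ℝ (fun y : V3 => y b * v y a) x := (hp b).mul (hk a)
  rw [pd_sub j d1 d2, pd_mul j (hp a) (hk b), pd_mul j (hp b) (hk a), pd_proj, pd_proj,
    pd_comp_proj hvd, pd_comp_proj hvd]

lemma pd_pd_cross (v : V3 → V3) (hv : ContDiff ℝ (⊤ : ℕ∞) v) (a b j : Fin 3) (x : V3) :
    pd j (fun y => pd j (fun z => z a * v z b - z b * v z a) y) x
      = ((if a = j then (1:ℝ) else 0) * fderiv ℝ v x (Pi.single j 1) b
          + ((if a = j then (1:ℝ) else 0) * fderiv ℝ v x (Pi.single j 1) b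
             + x a * fderiv ℝ (fderiv ℝ v) x (Pi.single j 1) (Pi.single j 1) b))
        - ((if b = j then (1:ℝ) else 0) * fderiv ℝ v x (Pi.single j 1) a
          + ((if b = j then (1:ℝ) else 0) * fderiv ℝ v x (Pi.single j 1) a
             + x b * fderiv ℝ (fderiv ℝ v) x (Pi.single j 1) (Pi.single j 1) a)) := by
  have hvd : Differentiable ℝ v := hv.differentiable (by simp)
  have h1 : (fun y => pd j (fun z => z a * v z b - z b * v z a) y)
      = fun y => ((if a = j then (1:ℝ) else 0) * v y b + y a * fderiv ℝ v y (Pi.single j 1) b)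
        - ((if b = j then (1:ℝ) else 0) * v y a + y b * fderiv ℝ v y (Pi.single j 1) a) :=
    funext fun y => pd_cross v hv a b j y
  rw [h1]
  have hk : ∀ k : Fin 3, DifferentiableAt ℝ (fun y : V3 => v y k) x := fun k =>
    ((contDiff_pi.1 hv k).differentiable (by simp)) x
  have hp : ∀ k : Fin 3, DifferentiableAt ℝ (fun y : V3 => y k) x := fun k =>
    ((contDiff_pi.1 (contDiff_id (E := V3)) k).differentiable (by simp : (⊤ : WithTop ℕ∞) ≠ 0)) x
  have hD : ∀ k : Fin 3, DifferentiableAt ℝ (fun y => fderiv ℝ v y (Pi.single j 1) k) x :=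
    fun k => ((contDiff_D hv j k).differentiable (by simp)) x
  have dA1 : DifferentiableAt ℝ (fun y : V3 => (if a = j then (1:ℝ) else 0) * v y b) x :=
    (differentiableAt_const _).mul (hk b)
  have dA2 : DifferentiableAt ℝ (fun y : V3 => y a * fderiv ℝ v y (Pi.single j 1) b) x :=
    (hp a).mul (hD b)
  have dB1 : DifferentiableAt ℝ (fun y : V3 => (if b = j then (1:ℝ) else 0) * v y a) x :=
    (differentiableAt_const _).mul (hk a)
  have dB2 : DifferentiableAt ℝ (fun y : V3 => y b * fderiv ℝ v y (Pi.single j 1) a) x :=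
    (hp b).mul (hD a)
  rw [pd_sub j (dA1.fun_add dA2) (dB1.fun_add dB2), pd_add j dA1 dA2, pd_add j dB1 dB2,
    pd_const_mul j _ (hk b), pd_const_mul j _ (hk a), pd_mul j (hp a) (hD b),
    pd_mul j (hp b) (hD a), pd_proj, pd_proj, pd_comp_proj hvd, pd_comp_proj hvd,
    pd_D hv j j b, pd_D hv j j a]
lemma one_le_t (x : V3) : (1:ℝ) ≤ 1 + ‖x‖ := by linarith [norm_nonneg x]

lemma abs_mul_le {u v A B : ℝ} (hu : |u| ≤ A) (hv : |v| ≤ B) : |u * v| ≤ A * B := by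
  rw [abs_mul]; exact mul_le_mul hu hv (abs_nonneg _) ((abs_nonneg u).trans hu)

lemma abs_sub_le' (u v : ℝ) : |u - v| ≤ |u| + |v| := by
  calc |u - v| = |u + -v| := by rw [sub_eq_add_neg]
    _ ≤ |u| + |-v| := abs_add_le _ _
    _ = |u| + |v| := by rw [abs_neg]

lemma abs_if_le (c : Prop) [Decidable c] : |if c then (1:ℝ) else 0| ≤ 1 := by
  split_ifs <;> norm_num

lemma pow_absorb {t g C : ℝ} (ht : 1 ≤ t) (hg : 0 ≤ g) (h8 : t ^ 8 * g ≤ C) {k : ℕ} (hk : k ≤ 8) :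
    t ^ k * g ≤ C :=
  le_trans (mul_le_mul_of_nonneg_right (pow_le_pow_right₀ ht hk) hg) h8

lemma aux2 (U φ : V3 → V3) (p : V3 → ℝ) (lam : ℝ) (a b : Fin 3) (hab : a ≠ b)
    (hUs : ContDiff ℝ (⊤ : ℕ∞) U) (hφs : ContDiff ℝ (⊤ : ℕ∞) φ) (hps : ContDiff ℝ (⊤ : ℕ∞) p)
    (hUdiv : ∀ x : V3, div3 U x = 0) (hφdiv : ∀ x : V3, div3 φ x = 0)
    (hUgrowth : ∃ C : ℝ, ∀ x : V3,
      (1 + ‖x‖) * ‖U x‖ ≤ C ∧ (1 + ‖x‖) ^ 2 * ‖fderiv ℝ U x‖ ≤ C)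
    (hφdecay : ∀ n : ℕ, ∃ C : ℝ, ∀ x : V3,
      (1 + ‖x‖) ^ n * ‖φ x‖ ≤ C ∧ (1 + ‖x‖) ^ n * ‖fderiv ℝ φ x‖ ≤ C ∧
      (1 + ‖x‖) ^ n * ‖fderiv ℝ (fderiv ℝ φ) x‖ ≤ C)
    (hpdecay : ∀ n : ℕ, ∃ C : ℝ, ∀ x : V3,
      (1 + ‖x‖) ^ n * |p x| ≤ C ∧ (1 + ‖x‖) ^ n * ‖fderiv ℝ p x‖ ≤ C)
    (heq : ∀ x : V3,
      -(lap (fun y => y a * φ y b - y b * φ y a) x)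
        + 2 * (pd a (fun y => φ y b) x - pd b (fun y => φ y a) x)
        - (∑ j : Fin 3, x j * pd j (fun y => y a * φ y b - y b * φ y a) x) / 2
        + (∑ j : Fin 3, U x j * pd j (fun y => y a * φ y b - y b * φ y a) x)
        + (∑ j : Fin 3, φ x j * pd j (fun y => y a * U y b - y b * U y a) x)
        + (x a * pd b p x - x b * pd a p x)
        = lam * (x a * φ x b - x b * φ x a)) :
    (3 / 2 : ℝ) * ∫ x : V3, (x a * φ x b - x b * φ x a)
      = lam * ∫ x : V3, (x a * φ x b - x b * φ x a) := by
  obtain ⟨τ, hτdef⟩ : ∃ τ : V3 → ℝ, τ = fun y : V3 => y a * φ y b - y b * φ y a := ⟨_, rfl⟩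
  obtain ⟨T, hTdef⟩ : ∃ T : V3 → ℝ, T = fun y : V3 => y a * U y b - y b * U y a := ⟨_, rfl⟩
  rw [← hτdef] at heq ⊢
  rw [← hTdef] at heq
  -- basic smoothness
  have hφd : Differentiable ℝ φ := hφs.differentiable (by simp)
  have hUd : Differentiable ℝ U := hUs.differentiable (by simp)
  have hpdif : Differentiable ℝ p := hps.differentiable (by simp)
  have hproj : ∀ k : Fin 3, ContDiff ℝ (⊤ : ℕ∞) (fun y : V3 => y k) := fun k =>
    contDiff_pi.1 (contDiff_id (E := V3)) k
  have hΦ : ∀ k : Fin 3, ContDiff ℝ (⊤ : ℕ∞) (fun y : V3 => φ y k) := fun k => contDiff_pi.1 hφs k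
  have hUk : ∀ k : Fin 3, ContDiff ℝ (⊤ : ℕ∞) (fun y : V3 => U y k) := fun k => contDiff_pi.1 hUs k
  have hτs : ContDiff ℝ (⊤ : ℕ∞) τ := by
    rw [hτdef]; exact ((hproj a).mul (hΦ b)).sub ((hproj b).mul (hΦ a))
  have hTs : ContDiff ℝ (⊤ : ℕ∞) T := by
    rw [hTdef]; exact ((hproj a).mul (hUk b)).sub ((hproj b).mul (hUk a))
  -- decay constants
  obtain ⟨Cφ, hCφ⟩ := hφdecay 8
  obtain ⟨CU, hCU⟩ := hUgrowth
  obtain ⟨Cp, hCp⟩ := hpdecay 8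
  have hCU0 : 0 ≤ CU := le_trans (by positivity) (hCU 0).1
  have hUb : ∀ x : V3, ‖U x‖ ≤ CU := fun x => by
    have h1 := (hCU x).1
    nlinarith [norm_nonneg (U x), norm_nonneg x]
  have hU1b : ∀ x : V3, (1 + ‖x‖) * ‖fderiv ℝ U x‖ ≤ CU := fun x => by
    have h1 := (hCU x).2
    nlinarith [norm_nonneg (fderiv ℝ U x), norm_nonneg x]
  have hU2b : ∀ x : V3, ‖fderiv ℝ U x‖ ≤ CU := fun x => by
    have h1 := hU1b x
    nlinarith [norm_nonneg (fderiv ℝ U x), norm_nonneg x]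
  -- pointwise values
  have hτx : ∀ x : V3, τ x = x a * φ x b - x b * φ x a := fun x => by rw [hτdef]
  have hTx : ∀ x : V3, T x = x a * U x b - x b * U x a := fun x => by rw [hTdef]
  have hpdτx : ∀ (j : Fin 3) (x : V3), pd j τ x
      = ((if a = j then (1:ℝ) else 0) * φ x b + x a * fderiv ℝ φ x (Pi.single j 1) b)
        - ((if b = j then (1:ℝ) else 0) * φ x a + x b * fderiv ℝ φ x (Pi.single j 1) a) :=
    fun j x => by rw [hτdef]; exact pd_cross φ hφs a b j x
  have hpdTx : ∀ (j : Fin 3) (x : V3), pd j T x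
      = ((if a = j then (1:ℝ) else 0) * U x b + x a * fderiv ℝ U x (Pi.single j 1) b)
        - ((if b = j then (1:ℝ) else 0) * U x a + x b * fderiv ℝ U x (Pi.single j 1) a) :=
    fun j x => by rw [hTdef]; exact pd_cross U hUs a b j x
  have hpd2τx : ∀ (j : Fin 3) (x : V3), pd j (fun y => pd j τ y) x
      = ((if a = j then (1:ℝ) else 0) * fderiv ℝ φ x (Pi.single j 1) b
          + ((if a = j then (1:ℝ) else 0) * fderiv ℝ φ x (Pi.single j 1) b
             + x a * fderiv ℝ (fderiv ℝ φ) x (Pi.single j 1) (Pi.single j 1) b))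
        - ((if b = j then (1:ℝ) else 0) * fderiv ℝ φ x (Pi.single j 1) a
          + ((if b = j then (1:ℝ) else 0) * fderiv ℝ φ x (Pi.single j 1) a
             + x b * fderiv ℝ (fderiv ℝ φ) x (Pi.single j 1) (Pi.single j 1) a)) :=
    fun j x => by rw [hτdef]; exact pd_pd_cross φ hφs a b j x
  -- pointwise bounds
  have hbτ : ∀ x : V3, |τ x| ≤ 2 * (1 + ‖x‖) * ‖φ x‖ := by
    intro x
    rw [hτx]
    calc |x a * φ x b - x b * φ x a| ≤ |x a * φ x b| + |x b * φ x a| := abs_sub_le' _ _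
      _ ≤ (1 + ‖x‖) * ‖φ x‖ + (1 + ‖x‖) * ‖φ x‖ :=
          add_le_add (abs_mul_le (abs_coord_le x a) (abs_comp_le φ x b))
            (abs_mul_le (abs_coord_le x b) (abs_comp_le φ x a))
      _ = 2 * (1 + ‖x‖) * ‖φ x‖ := by ring
  have hbT : ∀ x : V3, |T x| ≤ 2 * CU := by
    intro x
    rw [hTx]
    have h1 : |x a * U x b| ≤ (1 + ‖x‖) * ‖U x‖ :=
      abs_mul_le (abs_coord_le x a) (abs_comp_le U x b)
    have h2 : |x b * U x a| ≤ (1 + ‖x‖) * ‖U x‖ :=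
      abs_mul_le (abs_coord_le x b) (abs_comp_le U x a)
    have h3 := (hCU x).1
    calc |x a * U x b - x b * U x a| ≤ |x a * U x b| + |x b * U x a| := abs_sub_le' _ _
      _ ≤ 2 * CU := by linarith
  have hbpdτ : ∀ (j : Fin 3) (x : V3),
      |pd j τ x| ≤ 2 * ‖φ x‖ + 2 * (1 + ‖x‖) * ‖fderiv ℝ φ x‖ := by
    intro j x
    rw [hpdτx]
    have h1 : |(if a = j then (1:ℝ) else 0) * φ x b| ≤ 1 * ‖φ x‖ :=
      abs_mul_le (abs_if_le _) (abs_comp_le φ x b)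
    have h2 : |x a * fderiv ℝ φ x (Pi.single j 1) b| ≤ (1 + ‖x‖) * ‖fderiv ℝ φ x‖ :=
      abs_mul_le (abs_coord_le x a) (abs_D_le φ j b x)
    have h3 : |(if b = j then (1:ℝ) else 0) * φ x a| ≤ 1 * ‖φ x‖ :=
      abs_mul_le (abs_if_le _) (abs_comp_le φ x a)
    have h4 : |x b * fderiv ℝ φ x (Pi.single j 1) a| ≤ (1 + ‖x‖) * ‖fderiv ℝ φ x‖ :=
      abs_mul_le (abs_coord_le x b) (abs_D_le φ j a x)
    calc |_ - _| ≤ |_| + |_| := abs_sub_le' _ _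
      _ ≤ (1 * ‖φ x‖ + (1 + ‖x‖) * ‖fderiv ℝ φ x‖)
          + (1 * ‖φ x‖ + (1 + ‖x‖) * ‖fderiv ℝ φ x‖) :=
        add_le_add ((abs_add_le _ _).trans (add_le_add h1 h2))
          ((abs_add_le _ _).trans (add_le_add h3 h4))
      _ = 2 * ‖φ x‖ + 2 * (1 + ‖x‖) * ‖fderiv ℝ φ x‖ := by ring
  have hbpdT : ∀ (j : Fin 3) (x : V3), |pd j T x| ≤ 4 * CU := by
    intro j x
    rw [hpdTx]
    have h1 : |(if a = j then (1:ℝ) else 0) * U x b| ≤ 1 * CU :=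
      abs_mul_le (abs_if_le _) ((abs_comp_le U x b).trans (hUb x))
    have h2 : |x a * fderiv ℝ U x (Pi.single j 1) b| ≤ (1 + ‖x‖) * ‖fderiv ℝ U x‖ :=
      abs_mul_le (abs_coord_le x a) (abs_D_le U j b x)
    have h3 : |(if b = j then (1:ℝ) else 0) * U x a| ≤ 1 * CU :=
      abs_mul_le (abs_if_le _) ((abs_comp_le U x a).trans (hUb x))
    have h4 : |x b * fderiv ℝ U x (Pi.single j 1) a| ≤ (1 + ‖x‖) * ‖fderiv ℝ U x‖ :=
      abs_mul_le (abs_coord_le x b) (abs_D_le U j a x)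
    have h5 := hU1b x
    calc |_ - _| ≤ |_| + |_| := abs_sub_le' _ _
      _ ≤ (1 * CU + (1 + ‖x‖) * ‖fderiv ℝ U x‖) + (1 * CU + (1 + ‖x‖) * ‖fderiv ℝ U x‖) :=
        add_le_add ((abs_add_le _ _).trans (add_le_add h1 h2))
          ((abs_add_le _ _).trans (add_le_add h3 h4))
      _ ≤ 4 * CU := by linarith
  have hbpd2τ : ∀ (j : Fin 3) (x : V3), |pd j (fun y => pd j τ y) x|
      ≤ 4 * ‖fderiv ℝ φ x‖ + 2 * (1 + ‖x‖) * ‖fderiv ℝ (fderiv ℝ φ) x‖ := by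
    intro j x
    rw [hpd2τx]
    have h1 : |(if a = j then (1:ℝ) else 0) * fderiv ℝ φ x (Pi.single j 1) b|
        ≤ 1 * ‖fderiv ℝ φ x‖ := abs_mul_le (abs_if_le _) (abs_D_le φ j b x)
    have h2 : |x a * fderiv ℝ (fderiv ℝ φ) x (Pi.single j 1) (Pi.single j 1) b|
        ≤ (1 + ‖x‖) * ‖fderiv ℝ (fderiv ℝ φ) x‖ :=
      abs_mul_le (abs_coord_le x a) (abs_D2_le φ j j b x)
    have h3 : |(if b = j then (1:ℝ) else 0) * fderiv ℝ φ x (Pi.single j 1) a|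
        ≤ 1 * ‖fderiv ℝ φ x‖ := abs_mul_le (abs_if_le _) (abs_D_le φ j a x)
    have h4 : |x b * fderiv ℝ (fderiv ℝ φ) x (Pi.single j 1) (Pi.single j 1) a|
        ≤ (1 + ‖x‖) * ‖fderiv ℝ (fderiv ℝ φ) x‖ :=
      abs_mul_le (abs_coord_le x b) (abs_D2_le φ j j a x)
    calc |_ - _| ≤ |_| + |_| := abs_sub_le' _ _
      _ ≤ (1 * ‖fderiv ℝ φ x‖ + (1 * ‖fderiv ℝ φ x‖
            + (1 + ‖x‖) * ‖fderiv ℝ (fderiv ℝ φ) x‖))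
          + (1 * ‖fderiv ℝ φ x‖ + (1 * ‖fderiv ℝ φ x‖
            + (1 + ‖x‖) * ‖fderiv ℝ (fderiv ℝ φ) x‖)) :=
        add_le_add ((abs_add_le _ _).trans (add_le_add h1 ((abs_add_le _ _).trans (add_le_add h1 h2))))
          ((abs_add_le _ _).trans (add_le_add h3 ((abs_add_le _ _).trans (add_le_add h3 h4))))
      _ = 4 * ‖fderiv ℝ φ x‖ + 2 * (1 + ‖x‖) * ‖fderiv ℝ (fderiv ℝ φ) x‖ := by ring
  -- integrability
  have habs0 : ∀ x : V3, (0:ℝ) ≤ (1 + ‖x‖) ^ 4 := fun x => by positivity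
  have hInt_τ : Integrable τ := by
    apply integrable_decay4 hτs.continuous (C := 2 * Cφ)
    intro x
    have h5 : (1 + ‖x‖) ^ 5 * ‖φ x‖ ≤ Cφ :=
      pow_absorb (one_le_t x) (norm_nonneg _) (hCφ x).1 (by norm_num)
    calc (1 + ‖x‖) ^ 4 * |τ x| ≤ (1 + ‖x‖) ^ 4 * (2 * (1 + ‖x‖) * ‖φ x‖) :=
          mul_le_mul_of_nonneg_left (hbτ x) (habs0 x)
      _ = 2 * ((1 + ‖x‖) ^ 5 * ‖φ x‖) := by ring
      _ ≤ 2 * Cφ := by linarith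
  have hInt_pdτ : ∀ j : Fin 3, Integrable (pd j τ) := by
    intro j
    apply integrable_decay4 (contDiff_pd hτs j).continuous (C := 4 * Cφ)
    intro x
    have h4 : (1 + ‖x‖) ^ 4 * ‖φ x‖ ≤ Cφ :=
      pow_absorb (one_le_t x) (norm_nonneg _) (hCφ x).1 (by norm_num)
    have h5 : (1 + ‖x‖) ^ 5 * ‖fderiv ℝ φ x‖ ≤ Cφ :=
      pow_absorb (one_le_t x) (norm_nonneg _) (hCφ x).2.1 (by norm_num)
    calc (1 + ‖x‖) ^ 4 * |pd j τ x|
        ≤ (1 + ‖x‖) ^ 4 * (2 * ‖φ x‖ + 2 * (1 + ‖x‖) * ‖fderiv ℝ φ x‖) :=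
          mul_le_mul_of_nonneg_left (hbpdτ j x) (habs0 x)
      _ = 2 * ((1 + ‖x‖) ^ 4 * ‖φ x‖) + 2 * ((1 + ‖x‖) ^ 5 * ‖fderiv ℝ φ x‖) := by ring
      _ ≤ 4 * Cφ := by linarith
  have hInt_pd2τ : ∀ j : Fin 3, Integrable (pd j (fun y => pd j τ y)) := by
    intro j
    apply integrable_decay4 (contDiff_pd (contDiff_pd hτs j) j).continuous (C := 6 * Cφ)
    intro x
    have h4 : (1 + ‖x‖) ^ 4 * ‖fderiv ℝ φ x‖ ≤ Cφ :=
      pow_absorb (one_le_t x) (norm_nonneg _) (hCφ x).2.1 (by norm_num)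
    have h5 : (1 + ‖x‖) ^ 5 * ‖fderiv ℝ (fderiv ℝ φ) x‖ ≤ Cφ :=
      pow_absorb (g := ‖fderiv ℝ (fderiv ℝ φ) x‖) (k := 5) (one_le_t x) (norm_nonneg (fderiv ℝ (fderiv ℝ φ) x)) (hCφ x).2.2 (by norm_num)
    calc (1 + ‖x‖) ^ 4 * |pd j (fun y => pd j τ y) x|
        ≤ (1 + ‖x‖) ^ 4 * (4 * ‖fderiv ℝ φ x‖
            + 2 * (1 + ‖x‖) * ‖fderiv ℝ (fderiv ℝ φ) x‖) :=
          mul_le_mul_of_nonneg_left (hbpd2τ j x) (habs0 x)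
      _ = 4 * ((1 + ‖x‖) ^ 4 * ‖fderiv ℝ φ x‖)
          + 2 * ((1 + ‖x‖) ^ 5 * ‖fderiv ℝ (fderiv ℝ φ) x‖) := by ring
      _ ≤ 6 * Cφ := by linarith
  have hInt_Φ : ∀ k : Fin 3, Integrable (fun x : V3 => φ x k) := by
    intro k
    apply integrable_decay4 (hΦ k).continuous (C := Cφ)
    intro x
    have h4 : (1 + ‖x‖) ^ 4 * ‖φ x‖ ≤ Cφ :=
      pow_absorb (one_le_t x) (norm_nonneg _) (hCφ x).1 (by norm_num)
    calc (1 + ‖x‖) ^ 4 * |φ x k| ≤ (1 + ‖x‖) ^ 4 * ‖φ x‖ :=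
          mul_le_mul_of_nonneg_left (abs_comp_le φ x k) (habs0 x)
      _ ≤ Cφ := h4
  have hInt_DΦ : ∀ j k : Fin 3, Integrable (pd j (fun y => φ y k)) := by
    intro j k
    have he : pd j (fun y => φ y k) = fun x => fderiv ℝ φ x (Pi.single j 1) k :=
      funext fun x => pd_comp_proj hφd j k x
    rw [he]
    apply integrable_decay4 (contDiff_D hφs j k).continuous (C := Cφ)
    intro x
    have h4 : (1 + ‖x‖) ^ 4 * ‖fderiv ℝ φ x‖ ≤ Cφ :=
      pow_absorb (one_le_t x) (norm_nonneg _) (hCφ x).2.1 (by norm_num)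
    calc (1 + ‖x‖) ^ 4 * |fderiv ℝ φ x (Pi.single j 1) k|
        ≤ (1 + ‖x‖) ^ 4 * ‖fderiv ℝ φ x‖ :=
          mul_le_mul_of_nonneg_left (abs_D_le φ j k x) (habs0 x)
      _ ≤ Cφ := h4
  have hpdyjτ : ∀ (j : Fin 3) (x : V3),
      pd j (fun y => y j * τ y) x = τ x + x j * pd j τ x := by
    intro j x
    rw [pd_mul j (((hproj j).differentiable (by simp)) x) ((hτs.differentiable (by simp)) x), pd_proj]
    simp
  have hInt_yjτ : ∀ j : Fin 3, Integrable (fun y : V3 => y j * τ y) := by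
    intro j
    apply integrable_decay4 ((hproj j).mul hτs).continuous (C := 2 * Cφ)
    intro x
    have h6 : (1 + ‖x‖) ^ 6 * ‖φ x‖ ≤ Cφ :=
      pow_absorb (one_le_t x) (norm_nonneg _) (hCφ x).1 (by norm_num)
    have hb : |x j * τ x| ≤ (1 + ‖x‖) * (2 * (1 + ‖x‖) * ‖φ x‖) :=
      abs_mul_le (abs_coord_le x j) (hbτ x)
    calc (1 + ‖x‖) ^ 4 * |x j * τ x|
        ≤ (1 + ‖x‖) ^ 4 * ((1 + ‖x‖) * (2 * (1 + ‖x‖) * ‖φ x‖)) :=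
          mul_le_mul_of_nonneg_left hb (habs0 x)
      _ = 2 * ((1 + ‖x‖) ^ 6 * ‖φ x‖) := by ring
      _ ≤ 2 * Cφ := by linarith
  have hInt_pdyjτ : ∀ j : Fin 3, Integrable (pd j (fun y => y j * τ y)) := by
    intro j
    apply integrable_decay4 (contDiff_pd ((hproj j).mul hτs) j).continuous (C := 6 * Cφ)
    intro x
    have h5 : (1 + ‖x‖) ^ 5 * ‖φ x‖ ≤ Cφ :=
      pow_absorb (one_le_t x) (norm_nonneg _) (hCφ x).1 (by norm_num)
    have h6 : (1 + ‖x‖) ^ 6 * ‖fderiv ℝ φ x‖ ≤ Cφ :=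
      pow_absorb (one_le_t x) (norm_nonneg _) (hCφ x).2.1 (by norm_num)
    have hb : |pd j (fun y => y j * τ y) x|
        ≤ 2 * (1 + ‖x‖) * ‖φ x‖
          + (1 + ‖x‖) * (2 * ‖φ x‖ + 2 * (1 + ‖x‖) * ‖fderiv ℝ φ x‖) := by
      rw [hpdyjτ j]
      calc |τ x + x j * pd j τ x| ≤ |τ x| + |x j * pd j τ x| := abs_add_le _ _
        _ ≤ 2 * (1 + ‖x‖) * ‖φ x‖
            + (1 + ‖x‖) * (2 * ‖φ x‖ + 2 * (1 + ‖x‖) * ‖fderiv ℝ φ x‖) :=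
          add_le_add (hbτ x) (abs_mul_le (abs_coord_le x j) (hbpdτ j x))
    calc (1 + ‖x‖) ^ 4 * |pd j (fun y => y j * τ y) x|
        ≤ (1 + ‖x‖) ^ 4 * (2 * (1 + ‖x‖) * ‖φ x‖
          + (1 + ‖x‖) * (2 * ‖φ x‖ + 2 * (1 + ‖x‖) * ‖fderiv ℝ φ x‖)) :=
          mul_le_mul_of_nonneg_left hb (habs0 x)
      _ = 4 * ((1 + ‖x‖) ^ 5 * ‖φ x‖) + 2 * ((1 + ‖x‖) ^ 6 * ‖fderiv ℝ φ x‖) := by ring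
      _ ≤ 6 * Cφ := by linarith
  have hpdUjτ : ∀ (j : Fin 3) (x : V3), pd j (fun y => U y j * τ y) x
      = fderiv ℝ U x (Pi.single j 1) j * τ x + U x j * pd j τ x := by
    intro j x
    rw [pd_mul j (((hUk j).differentiable (by simp)) x) ((hτs.differentiable (by simp)) x),
      pd_comp_proj hUd]
  have hInt_Ujτ : ∀ j : Fin 3, Integrable (fun y : V3 => U y j * τ y) := by
    intro j
    apply integrable_decay4 ((hUk j).mul hτs).continuous (C := CU * (2 * Cφ))
    intro x
    have h5 : (1 + ‖x‖) ^ 5 * ‖φ x‖ ≤ Cφ :=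
      pow_absorb (one_le_t x) (norm_nonneg _) (hCφ x).1 (by norm_num)
    have hb : |U x j * τ x| ≤ CU * (2 * (1 + ‖x‖) * ‖φ x‖) :=
      abs_mul_le ((abs_comp_le U x j).trans (hUb x)) (hbτ x)
    calc (1 + ‖x‖) ^ 4 * |U x j * τ x|
        ≤ (1 + ‖x‖) ^ 4 * (CU * (2 * (1 + ‖x‖) * ‖φ x‖)) :=
          mul_le_mul_of_nonneg_left hb (habs0 x)
      _ = CU * (2 * ((1 + ‖x‖) ^ 5 * ‖φ x‖)) := by ring
      _ ≤ CU * (2 * Cφ) := by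
          apply mul_le_mul_of_nonneg_left _ hCU0
          linarith
  have hInt_pdUjτ : ∀ j : Fin 3, Integrable (pd j (fun y => U y j * τ y)) := by
    intro j
    apply integrable_decay4 (contDiff_pd ((hUk j).mul hτs) j).continuous (C := CU * (6 * Cφ))
    intro x
    have h4 : (1 + ‖x‖) ^ 4 * ‖φ x‖ ≤ Cφ :=
      pow_absorb (one_le_t x) (norm_nonneg _) (hCφ x).1 (by norm_num)
    have h5 : (1 + ‖x‖) ^ 5 * ‖φ x‖ ≤ Cφ :=
      pow_absorb (one_le_t x) (norm_nonneg _) (hCφ x).1 (by norm_num)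
    have h5' : (1 + ‖x‖) ^ 5 * ‖fderiv ℝ φ x‖ ≤ Cφ :=
      pow_absorb (one_le_t x) (norm_nonneg _) (hCφ x).2.1 (by norm_num)
    have hb : |pd j (fun y => U y j * τ y) x|
        ≤ CU * (2 * (1 + ‖x‖) * ‖φ x‖)
          + CU * (2 * ‖φ x‖ + 2 * (1 + ‖x‖) * ‖fderiv ℝ φ x‖) := by
      rw [hpdUjτ j]
      calc |fderiv ℝ U x (Pi.single j 1) j * τ x + U x j * pd j τ x|
          ≤ |fderiv ℝ U x (Pi.single j 1) j * τ x| + |U x j * pd j τ x| := abs_add_le _ _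
        _ ≤ CU * (2 * (1 + ‖x‖) * ‖φ x‖)
            + CU * (2 * ‖φ x‖ + 2 * (1 + ‖x‖) * ‖fderiv ℝ φ x‖) :=
          add_le_add (abs_mul_le ((abs_D_le U j j x).trans (hU2b x)) (hbτ x))
            (abs_mul_le ((abs_comp_le U x j).trans (hUb x)) (hbpdτ j x))
    calc (1 + ‖x‖) ^ 4 * |pd j (fun y => U y j * τ y) x|
        ≤ (1 + ‖x‖) ^ 4 * (CU * (2 * (1 + ‖x‖) * ‖φ x‖)
          + CU * (2 * ‖φ x‖ + 2 * (1 + ‖x‖) * ‖fderiv ℝ φ x‖)) :=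
          mul_le_mul_of_nonneg_left hb (habs0 x)
      _ = CU * (2 * ((1 + ‖x‖) ^ 5 * ‖φ x‖) + 2 * ((1 + ‖x‖) ^ 4 * ‖φ x‖)
          + 2 * ((1 + ‖x‖) ^ 5 * ‖fderiv ℝ φ x‖)) := by ring
      _ ≤ CU * (6 * Cφ) := by
          apply mul_le_mul_of_nonneg_left _ hCU0
          linarith
  have hpdφjT : ∀ (j : Fin 3) (x : V3), pd j (fun y => φ y j * T y) x
      = fderiv ℝ φ x (Pi.single j 1) j * T x + φ x j * pd j T x := by
    intro j x
    rw [pd_mul j (((hΦ j).differentiable (by simp)) x) ((hTs.differentiable (by simp)) x),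
      pd_comp_proj hφd]
  have hInt_φjT : ∀ j : Fin 3, Integrable (fun y : V3 => φ y j * T y) := by
    intro j
    apply integrable_decay4 ((hΦ j).mul hTs).continuous (C := Cφ * (2 * CU))
    intro x
    have h4 : (1 + ‖x‖) ^ 4 * ‖φ x‖ ≤ Cφ :=
      pow_absorb (one_le_t x) (norm_nonneg _) (hCφ x).1 (by norm_num)
    have hb : |φ x j * T x| ≤ ‖φ x‖ * (2 * CU) :=
      abs_mul_le (abs_comp_le φ x j) (hbT x)
    calc (1 + ‖x‖) ^ 4 * |φ x j * T x| ≤ (1 + ‖x‖) ^ 4 * (‖φ x‖ * (2 * CU)) :=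
          mul_le_mul_of_nonneg_left hb (habs0 x)
      _ = ((1 + ‖x‖) ^ 4 * ‖φ x‖) * (2 * CU) := by ring
      _ ≤ Cφ * (2 * CU) := by
          apply mul_le_mul_of_nonneg_right h4
          positivity
  have hInt_pdφjT : ∀ j : Fin 3, Integrable (pd j (fun y => φ y j * T y)) := by
    intro j
    apply integrable_decay4 (contDiff_pd ((hΦ j).mul hTs) j).continuous (C := 6 * (Cφ * CU))
    intro x
    have h4 : (1 + ‖x‖) ^ 4 * ‖φ x‖ ≤ Cφ :=
      pow_absorb (one_le_t x) (norm_nonneg _) (hCφ x).1 (by norm_num)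
    have h4' : (1 + ‖x‖) ^ 4 * ‖fderiv ℝ φ x‖ ≤ Cφ :=
      pow_absorb (one_le_t x) (norm_nonneg _) (hCφ x).2.1 (by norm_num)
    have hb : |pd j (fun y => φ y j * T y) x|
        ≤ ‖fderiv ℝ φ x‖ * (2 * CU) + ‖φ x‖ * (4 * CU) := by
      rw [hpdφjT j]
      calc |fderiv ℝ φ x (Pi.single j 1) j * T x + φ x j * pd j T x|
          ≤ |fderiv ℝ φ x (Pi.single j 1) j * T x| + |φ x j * pd j T x| := abs_add_le _ _
        _ ≤ ‖fderiv ℝ φ x‖ * (2 * CU) + ‖φ x‖ * (4 * CU) :=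
          add_le_add (abs_mul_le (abs_D_le φ j j x) (hbT x))
            (abs_mul_le (abs_comp_le φ x j) (hbpdT j x))
    calc (1 + ‖x‖) ^ 4 * |pd j (fun y => φ y j * T y) x|
        ≤ (1 + ‖x‖) ^ 4 * (‖fderiv ℝ φ x‖ * (2 * CU) + ‖φ x‖ * (4 * CU)) :=
          mul_le_mul_of_nonneg_left hb (habs0 x)
      _ = ((1 + ‖x‖) ^ 4 * ‖fderiv ℝ φ x‖) * (2 * CU)
          + ((1 + ‖x‖) ^ 4 * ‖φ x‖) * (4 * CU) := by ring
      _ ≤ Cφ * (2 * CU) + Cφ * (4 * CU) := by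
          apply add_le_add <;> apply mul_le_mul_of_nonneg_right _ (by positivity) <;>
            [exact h4'; exact h4]
      _ = 6 * (Cφ * CU) := by ring
  have hInt_yap : ∀ k : Fin 3, Integrable (fun y : V3 => y k * p y) := by
    intro k
    apply integrable_decay4 ((hproj k).mul hps).continuous (C := Cp)
    intro x
    have h5 : (1 + ‖x‖) ^ 5 * |p x| ≤ Cp :=
      pow_absorb (one_le_t x) (abs_nonneg _) (hCp x).1 (by norm_num)
    have hb : |x k * p x| ≤ (1 + ‖x‖) * |p x| := abs_mul_le (abs_coord_le x k) le_rfl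
    calc (1 + ‖x‖) ^ 4 * |x k * p x| ≤ (1 + ‖x‖) ^ 4 * ((1 + ‖x‖) * |p x|) :=
          mul_le_mul_of_nonneg_left hb (habs0 x)
      _ = (1 + ‖x‖) ^ 5 * |p x| := by ring
      _ ≤ Cp := h5
  have hpdykp : ∀ (j k : Fin 3) (x : V3), pd j (fun y => y k * p y) x
      = (if k = j then (1:ℝ) else 0) * p x + x k * pd j p x := by
    intro j k x
    rw [pd_mul j (((hproj k).differentiable (by simp)) x) (hpdif x), pd_proj]
  have hInt_pdykp : ∀ j k : Fin 3, Integrable (pd j (fun y => y k * p y)) := by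
    intro j k
    apply integrable_decay4 (contDiff_pd ((hproj k).mul hps) j).continuous (C := 2 * Cp)
    intro x
    have h4 : (1 + ‖x‖) ^ 4 * |p x| ≤ Cp :=
      pow_absorb (one_le_t x) (abs_nonneg _) (hCp x).1 (by norm_num)
    have h5 : (1 + ‖x‖) ^ 5 * ‖fderiv ℝ p x‖ ≤ Cp :=
      pow_absorb (one_le_t x) (norm_nonneg _) (hCp x).2 (by norm_num)
    have hb : |pd j (fun y => y k * p y) x| ≤ 1 * |p x| + (1 + ‖x‖) * ‖fderiv ℝ p x‖ := by
      rw [hpdykp j k]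
      calc |(if k = j then (1:ℝ) else 0) * p x + x k * pd j p x|
          ≤ |(if k = j then (1:ℝ) else 0) * p x| + |x k * pd j p x| := abs_add_le _ _
        _ ≤ 1 * |p x| + (1 + ‖x‖) * ‖fderiv ℝ p x‖ :=
          add_le_add (abs_mul_le (abs_if_le _) le_rfl)
            (abs_mul_le (abs_coord_le x k) (abs_pd_le p j x))
    calc (1 + ‖x‖) ^ 4 * |pd j (fun y => y k * p y) x|
        ≤ (1 + ‖x‖) ^ 4 * (1 * |p x| + (1 + ‖x‖) * ‖fderiv ℝ p x‖) :=
          mul_le_mul_of_nonneg_left hb (habs0 x)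
      _ = (1 + ‖x‖) ^ 4 * |p x| + (1 + ‖x‖) ^ 5 * ‖fderiv ℝ p x‖ := by ring
      _ ≤ 2 * Cp := by linarith
  -- zero integrals
  have hz1 : ∀ j : Fin 3, ∫ x : V3, pd j (fun y => pd j τ y) x = 0 := fun j =>
    integral_pd_eq_zero j ((contDiff_pd hτs j).differentiable (by simp))
      (hInt_pdτ j) (hInt_pd2τ j)
  have hzΦ : ∀ j k : Fin 3, ∫ x : V3, pd j (fun y => φ y k) x = 0 := fun j k =>
    integral_pd_eq_zero j ((hΦ k).differentiable (by simp)) (hInt_Φ k) (hInt_DΦ j k)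
  have hz2 : ∀ j : Fin 3, ∫ x : V3, pd j (fun y => y j * τ y) x = 0 := fun j =>
    integral_pd_eq_zero j (((hproj j).mul hτs).differentiable (by simp))
      (hInt_yjτ j) (hInt_pdyjτ j)
  have hz3 : ∀ j : Fin 3, ∫ x : V3, pd j (fun y => U y j * τ y) x = 0 := fun j =>
    integral_pd_eq_zero j (((hUk j).mul hτs).differentiable (by simp))
      (hInt_Ujτ j) (hInt_pdUjτ j)
  have hz4 : ∀ j : Fin 3, ∫ x : V3, pd j (fun y => φ y j * T y) x = 0 := fun j =>
    integral_pd_eq_zero j (((hΦ j).mul hTs).differentiable (by simp))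
      (hInt_φjT j) (hInt_pdφjT j)
  have hz5 : ∀ j k : Fin 3, ∫ x : V3, pd j (fun y => y k * p y) x = 0 := fun j k =>
    integral_pd_eq_zero j (((hproj k).mul hps).differentiable (by simp))
      (hInt_yap k) (hInt_pdykp j k)
  -- the pointwise divergence identity
  have hfin : ∀ x : V3,
      (lam - 3 / 2) * τ x + lap τ x
        + (∑ j : Fin 3, pd j (fun y => y j * τ y) x) / 2
      = 2 * (pd a (fun y => φ y b) x - pd b (fun y => φ y a) x)
        + (∑ j : Fin 3, pd j (fun y => U y j * τ y) x)
        + (∑ j : Fin 3, pd j (fun y => φ y j * T y) x)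
        + (pd b (fun y => y a * p y) x - pd a (fun y => y b * p y) x) := by
    intro x
    have h := heq x
    have e1 : (∑ j : Fin 3, pd j (fun y => y j * τ y) x)
        = 3 * τ x + ∑ j : Fin 3, x j * pd j τ x := by
      rw [Finset.sum_congr rfl fun j _ => hpdyjτ j x, Finset.sum_add_distrib]
      simp [Finset.card_univ]
    have e2 : (∑ j : Fin 3, pd j (fun y => U y j * τ y) x)
        = ∑ j : Fin 3, U x j * pd j τ x := by
      rw [Finset.sum_congr rfl fun j _ => hpdUjτ j x, Finset.sum_add_distrib]
      have hdiv : (∑ j : Fin 3, fderiv ℝ U x (Pi.single j 1) j * τ x) = 0 := by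
        rw [← Finset.sum_mul]
        have hd : (∑ j : Fin 3, fderiv ℝ U x (Pi.single j 1) j) = 0 := by
          have h0 := hUdiv x
          rw [div3] at h0
          rw [← h0]
          exact Finset.sum_congr rfl fun j _ => (pd_comp_proj hUd j j x).symm
        rw [hd, zero_mul]
      rw [hdiv, zero_add]
    have e3 : (∑ j : Fin 3, pd j (fun y => φ y j * T y) x)
        = ∑ j : Fin 3, φ x j * pd j T x := by
      rw [Finset.sum_congr rfl fun j _ => hpdφjT j x, Finset.sum_add_distrib]
      have hdiv : (∑ j : Fin 3, fderiv ℝ φ x (Pi.single j 1) j * T x) = 0 := by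
        rw [← Finset.sum_mul]
        have hd : (∑ j : Fin 3, fderiv ℝ φ x (Pi.single j 1) j) = 0 := by
          have h0 := hφdiv x
          rw [div3] at h0
          rw [← h0]
          exact Finset.sum_congr rfl fun j _ => (pd_comp_proj hφd j j x).symm
        rw [hd, zero_mul]
      rw [hdiv, zero_add]
    have e4 : pd b (fun y => y a * p y) x = x a * pd b p x := by
      rw [hpdykp b a x, if_neg hab, zero_mul, zero_add]
    have e5 : pd a (fun y => y b * p y) x = x b * pd a p x := by
      rw [hpdykp a b x, if_neg (Ne.symm hab), zero_mul, zero_add]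
    have hτval := hτx x
    rw [← hτval] at h
    rw [e1, e2, e3, e4, e5]
    linarith [h]
  -- integrability of the grouped functions
  have hIτc : Integrable (fun x : V3 => (lam - 3 / 2) * τ x) := hInt_τ.const_mul _
  have hIlapf : Integrable (fun x : V3 => lap τ x) := by
    have hh : (fun x : V3 => lap τ x)
        = fun x : V3 => ∑ j : Fin 3, pd j (fun y => pd j τ y) x := rfl
    rw [hh]
    exact integrable_finset_sum _ fun j _ => hInt_pd2τ j
  have hIS1 : Integrable (fun x : V3 => ∑ j : Fin 3, pd j (fun y => y j * τ y) x) :=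
    integrable_finset_sum _ fun j _ => hInt_pdyjτ j
  have hIS2 : Integrable (fun x : V3 => ∑ j : Fin 3, pd j (fun y => U y j * τ y) x) :=
    integrable_finset_sum _ fun j _ => hInt_pdUjτ j
  have hIS3 : Integrable (fun x : V3 => ∑ j : Fin 3, pd j (fun y => φ y j * T y) x) :=
    integrable_finset_sum _ fun j _ => hInt_pdφjT j
  have hIcurl : Integrable (fun x : V3 =>
      2 * (pd a (fun y => φ y b) x - pd b (fun y => φ y a) x)) :=
    (((hInt_DΦ a b).sub (hInt_DΦ b a)).const_mul 2)
  have hIpr : Integrable (fun x : V3 =>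
      pd b (fun y => y a * p y) x - pd a (fun y => y b * p y) x) :=
    (hInt_pdykp b a).sub (hInt_pdykp a b)
  -- integrate the identity
  have hEQ : ∫ x : V3, ((lam - 3 / 2) * τ x + lap τ x
        + (∑ j : Fin 3, pd j (fun y => y j * τ y) x) / 2)
      = ∫ x : V3, (2 * (pd a (fun y => φ y b) x - pd b (fun y => φ y a) x)
        + (∑ j : Fin 3, pd j (fun y => U y j * τ y) x)
        + (∑ j : Fin 3, pd j (fun y => φ y j * T y) x)
        + (pd b (fun y => y a * p y) x - pd a (fun y => y b * p y) x)) :=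
    integral_congr_ae (Filter.EventuallyEq.of_eq (funext hfin))
  have hLHS : ∫ x : V3, ((lam - 3 / 2) * τ x + lap τ x
        + (∑ j : Fin 3, pd j (fun y => y j * τ y) x) / 2)
      = (lam - 3 / 2) * ∫ x : V3, τ x := by
    have i12 : Integrable (fun x : V3 => (lam - 3 / 2) * τ x + lap τ x) := hIτc.add hIlapf
    have i3 : Integrable (fun x : V3 =>
        (∑ j : Fin 3, pd j (fun y => y j * τ y) x) / 2) := hIS1.div_const 2
    rw [integral_add i12 i3, integral_add hIτc hIlapf, integral_const_mul _ _, integral_div]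
    have h1 : ∫ x : V3, lap τ x = 0 := by
      have hh : (fun x : V3 => lap τ x)
          = fun x : V3 => ∑ j : Fin 3, pd j (fun y => pd j τ y) x := rfl
      rw [hh, integral_finset_sum _ fun j _ => hInt_pd2τ j]
      exact Finset.sum_eq_zero fun j _ => hz1 j
    have h2 : ∫ x : V3, (∑ j : Fin 3, pd j (fun y => y j * τ y) x) = 0 := by
      rw [integral_finset_sum _ fun j _ => hInt_pdyjτ j]
      exact Finset.sum_eq_zero fun j _ => hz2 j
    rw [h1, h2]
    ring
  have hRHS : ∫ x : V3, (2 * (pd a (fun y => φ y b) x - pd b (fun y => φ y a) x)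
        + (∑ j : Fin 3, pd j (fun y => U y j * τ y) x)
        + (∑ j : Fin 3, pd j (fun y => φ y j * T y) x)
        + (pd b (fun y => y a * p y) x - pd a (fun y => y b * p y) x)) = 0 := by
    have r1 : Integrable (fun x : V3 =>
        2 * (pd a (fun y => φ y b) x - pd b (fun y => φ y a) x)
          + (∑ j : Fin 3, pd j (fun y => U y j * τ y) x)) := hIcurl.add hIS2
    have r2 : Integrable (fun x : V3 =>
        (2 * (pd a (fun y => φ y b) x - pd b (fun y => φ y a) x)
          + (∑ j : Fin 3, pd j (fun y => U y j * τ y) x))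
          + (∑ j : Fin 3, pd j (fun y => φ y j * T y) x)) := r1.add hIS3
    rw [integral_add r2 hIpr, integral_add r1 hIS3, integral_add hIcurl hIS2]
    have h1 : ∫ x : V3, 2 * (pd a (fun y => φ y b) x - pd b (fun y => φ y a) x) = 0 := by
      rw [integral_const_mul _ _, integral_sub (hInt_DΦ a b) (hInt_DΦ b a), hzΦ a b, hzΦ b a]
      ring
    have h2 : ∫ x : V3, (∑ j : Fin 3, pd j (fun y => U y j * τ y) x) = 0 := by
      rw [integral_finset_sum _ fun j _ => hInt_pdUjτ j]
      exact Finset.sum_eq_zero fun j _ => hz3 j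
    have h3 : ∫ x : V3, (∑ j : Fin 3, pd j (fun y => φ y j * T y) x) = 0 := by
      rw [integral_finset_sum _ fun j _ => hInt_pdφjT j]
      exact Finset.sum_eq_zero fun j _ => hz4 j
    have h4 : ∫ x : V3, (pd b (fun y => y a * p y) x - pd a (fun y => y b * p y) x) = 0 := by
      rw [integral_sub (hInt_pdykp b a) (hInt_pdykp a b), hz5 b a, hz5 a b]
      ring
    rw [h1, h2, h3, h4]
    ring
  have hkey : (lam - 3 / 2) * ∫ x : V3, τ x = 0 := by rw [← hLHS, hEQ, hRHS]
  linear_combination (-1 : ℝ) * hkey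

/-- if `τ = x × φ` satisfies the momentum form of the eigenvalue
equation `−Δτ + 2ω − (x/2)·∇τ + (U·∇)τ + (φ·∇)T + x × ∇p = λτ` with `ω = ∇×φ`,
`T = x × U`, `φ` rapidly decaying, then `(3/2)∫τ = λ∫τ`; hence `∫ x×φ ≠ 0` forces
`λ = 3/2`. -/
theorem statement11 (U φ : V3 → V3) (p : V3 → ℝ) (lam : ℝ)
    (hUs : ContDiff ℝ (⊤ : ℕ∞) U) (hφs : ContDiff ℝ (⊤ : ℕ∞) φ) (hps : ContDiff ℝ (⊤ : ℕ∞) p)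
    (hUdiv : ∀ x : V3, div3 U x = 0) (hφdiv : ∀ x : V3, div3 φ x = 0)
    (hUgrowth : ∃ C : ℝ, ∀ x : V3,
      (1 + ‖x‖) * ‖U x‖ ≤ C ∧ (1 + ‖x‖) ^ 2 * ‖fderiv ℝ U x‖ ≤ C)
    (hφdecay : ∀ n : ℕ, ∃ C : ℝ, ∀ x : V3,
      (1 + ‖x‖) ^ n * ‖φ x‖ ≤ C ∧ (1 + ‖x‖) ^ n * ‖fderiv ℝ φ x‖ ≤ C ∧
      (1 + ‖x‖) ^ n * ‖fderiv ℝ (fderiv ℝ φ) x‖ ≤ C)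
    (hpdecay : ∀ n : ℕ, ∃ C : ℝ, ∀ x : V3,
      (1 + ‖x‖) ^ n * |p x| ≤ C ∧ (1 + ‖x‖) ^ n * ‖fderiv ℝ p x‖ ≤ C)
    (heq : ∀ (x : V3) (i : Fin 3),
      -(lap (fun y => cross3 y (φ y) i) x) + 2 * curl3 φ x i
        - (∑ j : Fin 3, x j * pd j (fun y => cross3 y (φ y) i) x) / 2
        + (∑ j : Fin 3, U x j * pd j (fun y => cross3 y (φ y) i) x)
        + (∑ j : Fin 3, φ x j * pd j (fun y => cross3 y (U y) i) x)
        + cross3 x (fun k => pd k p x) i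
        = lam * cross3 x (φ x) i) :
    (∀ i : Fin 3,
      (3 / 2 : ℝ) * ∫ x : V3, cross3 x (φ x) i = lam * ∫ x : V3, cross3 x (φ x) i) ∧
    ((∃ i : Fin 3, (∫ x : V3, cross3 x (φ x) i) ≠ 0) → lam = 3 / 2) := by
  have key : ∀ i : Fin 3,
      (3 / 2 : ℝ) * ∫ x : V3, cross3 x (φ x) i = lam * ∫ x : V3, cross3 x (φ x) i := by
    intro i
    have hab : (i + 1 : Fin 3) ≠ i + 2 := by fin_cases i <;> decide
    have hgoal : (fun x : V3 => cross3 x (φ x) i)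
        = fun x : V3 => x (i+1) * φ x (i+2) - x (i+2) * φ x (i+1) :=
      funext fun x => cross3_apply _ _ _
    have heq' : ∀ x : V3,
        -(lap (fun y => y (i+1) * φ y (i+2) - y (i+2) * φ y (i+1)) x)
          + 2 * (pd (i+1) (fun y => φ y (i+2)) x - pd (i+2) (fun y => φ y (i+1)) x)
          - (∑ j : Fin 3, x j * pd j (fun y => y (i+1) * φ y (i+2) - y (i+2) * φ y (i+1)) x) / 2
          + (∑ j : Fin 3, U x j * pd j (fun y => y (i+1) * φ y (i+2) - y (i+2) * φ y (i+1)) x)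
          + (∑ j : Fin 3, φ x j * pd j (fun y => y (i+1) * U y (i+2) - y (i+2) * U y (i+1)) x)
          + (x (i+1) * pd (i+2) p x - x (i+2) * pd (i+1) p x)
          = lam * (x (i+1) * φ x (i+2) - x (i+2) * φ x (i+1)) := by
      intro x
      have h := heq x i
      simpa only [cross3_apply, curl3_apply] using h
    have hres := aux2 U φ p lam (i+1) (i+2) hab hUs hφs hps hUdiv hφdiv hUgrowth
      hφdecay hpdecay heq'
    rw [hgoal]
    exact hres
  refine ⟨key, ?_⟩
  rintro ⟨i, hi⟩
  exact (mul_right_cancel₀ hi (key i)).symm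
end
end
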